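/- arXiv:2605.23658 — 9 statements merged into one kernel-verified Lean document; each statement's English description precedes it below -/
import Mathlib

section
/- Let T be a continuous self-map of a complete metric space X satisfying d(Tx, T²x) ≤ α·d(x, Tx) for some α ∈ (0,1) and all x ∈ X. Then T has a fixed point. -/
theorem stmt_1 {X : Type*} [MetricSpace X] [CompleteSpace X] [Nonempty X]
    (T : X → X) (hT : Continuous T) (α : ℝ) (hα0 : 0 < α) (hα1 : α < 1)
    (h : ∀ x : X, dist (T x) (T (T x)) ≤ α * dist x (T x)) :
    ∃ x : X, T x = x := by
  obtain ⟨x₀⟩ := ‹Nonempty X›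
  set f : ℕ → X := fun n => T^[n] x₀ with hf
  have hstep : ∀ n, dist (f n) (f (n + 1)) ≤ dist x₀ (T x₀) * α ^ n := by
    intro n
    induction n with
    | zero => simp [f]
    | succ n ih =>
      have : dist (f (n + 1)) (f (n + 2)) ≤ α * dist (f n) (f (n + 1)) := by
        simpa [f, Function.iterate_succ_apply'] using h (f n)
      calc dist (f (n + 1)) (f (n + 2)) ≤ α * dist (f n) (f (n + 1)) := this
        _ ≤ α * (dist x₀ (T x₀) * α ^ n) := by
            exact mul_le_mul_of_nonneg_left ih hα0.le
        _ = dist x₀ (T x₀) * α ^ (n + 1) := by ring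
  have hc : CauchySeq f := cauchySeq_of_le_geometric α _ hα1 hstep
  obtain ⟨x, hx⟩ := cauchySeq_tendsto_of_complete hc
  refine ⟨x, ?_⟩
  have h1 : Filter.Tendsto (fun n => T (f n)) Filter.atTop (nhds (T x)) :=
    (hT.tendsto x).comp hx
  have h2 : Filter.Tendsto (fun n => f (n + 1)) Filter.atTop (nhds x) :=
    hx.comp (Filter.tendsto_add_atTop_nat 1)
  have : (fun n => T (f n)) = fun n => f (n + 1) := by
    funext n; simp [f, Function.iterate_succ_apply']
  rw [this] at h1
  exact tendsto_nhds_unique h1 h2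
end

section
/- Let X be a nonempty complete metric space and T : X → X a continuous map such that for some n ∈ ℕ, n ≥ 1, and some α ∈ (0,1), the inequality d(Tⁿx, T^{2n}x) ≤ α·d(x, Tⁿx) holds for all x ∈ X. Then T has a periodic point, i.e., there exists x ∈ X and p ≥ 1 with Tᵖx = x. -/
theorem stmt_2 {X : Type*} [MetricSpace X] [CompleteSpace X] [Nonempty X]
    (T : X → X) (hT : Continuous T) (n : ℕ) (hn : 1 ≤ n)
    (α : ℝ) (hα0 : 0 < α) (hα1 : α < 1)
    (h : ∀ x : X, dist (T^[n] x) (T^[2 * n] x) ≤ α * dist x (T^[n] x)) :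
    ∃ (x : X) (p : ℕ), 1 ≤ p ∧ T^[p] x = x := by
  set f : X → X := T^[n] with hf
  have hfc : Continuous f := hT.iterate n
  have h' : ∀ x : X, dist (f x) (f (f x)) ≤ α * dist x (f x) := by
    intro x
    have := h x
    rwa [two_mul, Function.iterate_add_apply] at this
  obtain ⟨x₀⟩ := ‹Nonempty X›
  set u : ℕ → X := fun k => f^[k] x₀ with hu
  have hstep : ∀ k, dist (u k) (u (k + 1)) ≤ dist x₀ (f x₀) * α ^ k := by
    intro k
    induction k with
    | zero => simp [u]
    | succ k ih =>
      have : dist (u (k+1)) (u (k+2)) ≤ α * dist (u k) (u (k+1)) := by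
        have := h' (u k)
        simpa [u, Function.iterate_succ_apply'] using this
      calc dist (u (k+1)) (u (k+2)) ≤ α * dist (u k) (u (k+1)) := this
        _ ≤ α * (dist x₀ (f x₀) * α ^ k) := by
            exact mul_le_mul_of_nonneg_left ih hα0.le
        _ = dist x₀ (f x₀) * α ^ (k+1) := by ring
  have hcauchy : CauchySeq u := cauchySeq_of_le_geometric α _ hα1 hstep
  obtain ⟨z, hz⟩ := cauchySeq_tendsto_of_complete hcauchy
  have h1 : Filter.Tendsto (fun k => f (u k)) Filter.atTop (nhds (f z)) :=
    (hfc.continuousAt.tendsto).comp hz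
  have h2 : Filter.Tendsto (fun k => f (u k)) Filter.atTop (nhds z) := by
    have : (fun k => f (u k)) = fun k => u (k + 1) := by
      funext k; simp [u, Function.iterate_succ_apply']
    rw [this]
    exact hz.comp (Filter.tendsto_add_atTop_nat 1)
  have hfz : f z = z := tendsto_nhds_unique h1 h2
  exact ⟨z, n, hn, hfz⟩
end

section
/- Let X be a nonempty complete metric space and T : X → X a continuous graphic contraction of order n (for some n ≥ 1, α ∈ (0,1)). Then there exists x ∈ X with Tⁿx = x. -/
theorem stmt_3 {X : Type*} [MetricSpace X] [CompleteSpace X] [Nonempty X]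
    (T : X → X) (hT : Continuous T) (n : ℕ) (hn : 1 ≤ n)
    (α : ℝ) (hα0 : 0 < α) (hα1 : α < 1)
    (h : ∀ x : X, dist (T^[n] x) (T^[2 * n] x) ≤ α * dist x (T^[n] x)) :
    ∃ x : X, T^[n] x = x := by
  set S : X → X := T^[n] with hS
  have hScont : Continuous S := hT.iterate n
  have h' : ∀ x : X, dist (S x) (S (S x)) ≤ α * dist x (S x) := by
    intro x
    have : T^[2 * n] x = S (S x) := by
      rw [two_mul, Function.iterate_add_apply]
    simpa [this] using h x
  obtain ⟨x₀⟩ := ‹Nonempty X›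
  set u : ℕ → X := fun k => S^[k] x₀ with hu
  have key : ∀ k, dist (u k) (u (k + 1)) ≤ dist x₀ (S x₀) * α ^ k := by
    intro k
    induction k with
    | zero => simp [u]
    | succ k ih =>
      have : dist (u (k + 1)) (u (k + 2)) ≤ α * dist (u k) (u (k + 1)) := by
        have := h' (u k)
        simpa [u, Function.iterate_succ_apply'] using this
      calc dist (u (k + 1)) (u (k + 2)) ≤ α * dist (u k) (u (k + 1)) := this
        _ ≤ α * (dist x₀ (S x₀) * α ^ k) := by
            exact mul_le_mul_of_nonneg_left ih hα0.le
        _ = dist x₀ (S x₀) * α ^ (k + 1) := by ring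
  have hc : CauchySeq u := cauchySeq_of_le_geometric α (dist x₀ (S x₀)) hα1 key
  obtain ⟨x, hx⟩ := cauchySeq_tendsto_of_complete hc
  refine ⟨x, ?_⟩
  have h1 : Filter.Tendsto (fun k => S (u k)) Filter.atTop (nhds (S x)) :=
    (hScont.continuousAt.tendsto).comp hx
  have h2 : Filter.Tendsto (fun k => S (u k)) Filter.atTop (nhds x) := by
    have : (fun k => S (u k)) = fun k => u (k + 1) := by
      funext k; simp [u, Function.iterate_succ_apply']
    rw [this]
    exact hx.comp (Filter.tendsto_add_atTop_nat 1)
  exact tendsto_nhds_unique h1 h2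
end

section
/- Let X be a nonempty complete metric space and T : X → X a continuous graphic contraction of order n (for some n ≥ 1, α ∈ (0,1)). Then T has a periodic point whose prime (minimal) period divides n. -/
theorem stmt_4 {X : Type*} [MetricSpace X] [CompleteSpace X] [Nonempty X]
    (T : X → X) (hT : Continuous T) (n : ℕ) (hn : 1 ≤ n)
    (α : ℝ) (hα0 : 0 < α) (hα1 : α < 1)
    (h : ∀ x : X, dist (T^[n] x) (T^[2 * n] x) ≤ α * dist x (T^[n] x)) :
    ∃ (x : X) (p : ℕ), 1 ≤ p ∧ T^[p] x = x ∧
      (∀ q : ℕ, 1 ≤ q → T^[q] x = x → p ≤ q) ∧ p ∣ n := by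
  classical
  obtain ⟨x₀⟩ := ‹Nonempty X›
  set S := T^[n] with hS
  have hS2 : ∀ x, S (S x) = T^[2 * n] x := by
    intro x
    rw [hS, two_mul, Function.iterate_add_apply]
  have key : ∀ x, dist (S x) (S (S x)) ≤ α * dist x (S x) := by
    intro x; rw [hS2]; exact h x
  set f : ℕ → X := fun k => S^[k] x₀ with hf
  have hstep : ∀ k, f (k + 1) = S (f k) := by
    intro k; simp [hf, Function.iterate_succ_apply']
  have hdist : ∀ k, dist (f k) (f (k + 1)) ≤ dist x₀ (S x₀) * α ^ k := by
    intro k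
    induction k with
    | zero => simp [hf]
    | succ k ih =>
      have h1 : dist (f (k + 1)) (f (k + 2)) ≤ α * dist (f k) (f (k + 1)) := by
        rw [hstep (k + 1), hstep k]
        exact key (f k)
      calc dist (f (k + 1)) (f (k + 2)) ≤ α * dist (f k) (f (k + 1)) := h1
        _ ≤ α * (dist x₀ (S x₀) * α ^ k) := by
            exact mul_le_mul_of_nonneg_left ih hα0.le
        _ = dist x₀ (S x₀) * α ^ (k + 1) := by ring
  have hc : CauchySeq f := cauchySeq_of_le_geometric α (dist x₀ (S x₀)) hα1 hdist
  obtain ⟨z, hz⟩ := cauchySeq_tendsto_of_complete hc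
  have hScont : Continuous S := hT.iterate n
  have hSz : S z = z := by
    have h1 : Filter.Tendsto (fun k => f (k + 1)) Filter.atTop (nhds z) :=
      hz.comp (Filter.tendsto_add_atTop_nat 1)
    have h2 : Filter.Tendsto (fun k => S (f k)) Filter.atTop (nhds (S z)) :=
      (hScont.tendsto z).comp hz
    refine tendsto_nhds_unique h2 ?_
    simpa only [hstep] using h1
  have hex : ∃ q, 1 ≤ q ∧ T^[q] z = z := ⟨n, hn, hSz⟩
  set p := Nat.find hex with hp
  obtain ⟨hp1, hpz⟩ : 1 ≤ p ∧ T^[p] z = z := Nat.find_spec hex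
  have hmin : ∀ q : ℕ, 1 ≤ q → T^[q] z = z → p ≤ q := by
    intro q hq1 hqz
    exact Nat.find_le ⟨hq1, hqz⟩
  refine ⟨z, p, hp1, hpz, hmin, ?_⟩
  -- show p ∣ n
  have hmul : ∀ k, T^[p * k] z = z := by
    intro k
    rw [Function.iterate_mul]
    exact Function.iterate_fixed hpz k
  have hr : T^[n % p] z = z := by
    have hdec : n = p * (n / p) + n % p := (Nat.div_add_mod n p).symm
    have : T^[n] z = z := hSz
    rw [hdec, Nat.add_comm, Function.iterate_add_apply, hmul] at this
    exact this
  by_contra hnd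
  have hr0 : 1 ≤ n % p := by
    rcases Nat.eq_zero_or_pos (n % p) with h0 | h0
    · exact absurd (Nat.dvd_of_mod_eq_zero h0) hnd
    · exact h0
  have := hmin (n % p) hr0 hr
  have hlt : n % p < p := Nat.mod_lt n hp1
  omega
end

section
/- Let a < b be reals, define xₙ = a − 1/2ⁿ for odd n and xₙ = b + 1/2ⁿ for even n, let X = {a,b} ∪ {xₙ : n ≥ 1} with the Euclidean metric, and T : X → X given by T(xₙ) = x_{n+1}, T(a) = b, T(b) = a. Then for n = 2 the inequality d(T²x, T⁴x) ≤ α·d(x, T²x) holds for all x ∈ X whenever α ∈ [1/4, 1), i.e., T is a graphic contraction of order 2 with constant 1/4. -/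
theorem stmt_11 (a b : ℝ) (hab : a < b) (x : ℕ → ℝ)
    (hx : ∀ n : ℕ, 1 ≤ n → x n = if Odd n then a - (1 / 2 : ℝ) ^ n else b + (1 / 2 : ℝ) ^ n)
    (T : ℝ → ℝ)
    (hTx : ∀ n : ℕ, 1 ≤ n → T (x n) = x (n + 1))
    (hTa : T a = b) (hTb : T b = a) :
    ∀ α : ℝ, 1 / 4 ≤ α → α < 1 →
      ∀ y ∈ ({a, b} ∪ {y : ℝ | ∃ n : ℕ, 1 ≤ n ∧ y = x n} : Set ℝ),
        dist (T^[2] y) (T^[4] y) ≤ α * dist y (T^[2] y) := by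
  intro α hα1 hα2 y hy
  have hT2 : ∀ m : ℕ, 1 ≤ m → T^[2] (x m) = x (m + 2) := by
    intro m hm
    simp only [Function.iterate_succ, Function.iterate_zero, Function.comp_apply, id_eq]
    rw [hTx m hm, hTx (m + 1) (by omega)]
  rcases hy with hy | ⟨n, hn, rfl⟩
  · have h2 : T^[2] y = y := by
      rcases hy with rfl | rfl <;>
        simp [Function.iterate_succ, Function.comp, hTa, hTb]
    have h4 : T^[4] y = y := by
      rw [show (4 : ℕ) = 2 + 2 from rfl, Function.iterate_add_apply, h2, h2]
    rw [h2, h4, dist_self, mul_zero]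
  · rw [show (4 : ℕ) = 2 + 2 from rfl, Function.iterate_add_apply, hT2 n hn,
      hT2 (n + 2) (by omega), show n + 2 + 2 = n + 4 from rfl]
    rw [hx n hn, hx (n + 2) (by omega), hx (n + 4) (by omega)]
    have hp : (0 : ℝ) < (1 / 2 : ℝ) ^ n := by positivity
    set p : ℝ := (1 / 2 : ℝ) ^ n with hpdef
    have e2 : ((1 / 2 : ℝ)) ^ (n + 2) = p * (1 / 4) := by rw [pow_add]; ring
    have e4 : ((1 / 2 : ℝ)) ^ (n + 4) = p * (1 / 16) := by rw [pow_add]; ring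
    rw [e2, e4, Real.dist_eq, Real.dist_eq]
    rcases Nat.even_or_odd n with he | ho
    · rw [if_neg (Nat.not_odd_iff_even.mpr (he.add (by decide))),
        if_neg (Nat.not_odd_iff_even.mpr (he.add (by decide))),
        if_neg (Nat.not_odd_iff_even.mpr he)]
      rw [show (b + p * (1 / 4)) - (b + p * (1 / 16)) = 3 / 16 * p by ring,
        show (b + p) - (b + p * (1 / 4)) = 3 / 4 * p by ring,
        abs_of_nonneg (by nlinarith), abs_of_nonneg (by nlinarith)]
      nlinarith
    · rw [if_pos (ho.add_even (by decide)), if_pos (ho.add_even (by decide)), if_pos ho]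
      rw [show (a - p * (1 / 4)) - (a - p * (1 / 16)) = -(3 / 16 * p) by ring,
        show (a - p) - (a - p * (1 / 4)) = -(3 / 4 * p) by ring,
        abs_neg, abs_neg, abs_of_nonneg (by nlinarith), abs_of_nonneg (by nlinarith)]
      nlinarith
end

section
/- Let a < b be reals, define xₙ = a − 1/2ⁿ for odd n and xₙ = b + 1/2ⁿ for even n, X = {a,b} ∪ {xₙ : n ≥ 1} with the Euclidean metric, and T : X → X given by T(xₙ) = x_{n+1}, T(a) = b, T(b) = a. Then lim_{n→∞} d(Txₙ, T²xₙ)/d(xₙ, Txₙ) = 1; in particular, for every α ∈ (0,1) there exists x ∈ X with d(Tx, T²x) > α·d(x, Tx), so T is not a graphic contraction of order 1. -/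
open Filter Topology

theorem stmt_12 (a b : ℝ) (hab : a < b) (x : ℕ → ℝ)
    (hx : ∀ n : ℕ, 1 ≤ n → x n = if Odd n then a - (1 / 2 : ℝ) ^ n else b + (1 / 2 : ℝ) ^ n)
    (T : ℝ → ℝ)
    (hTx : ∀ n : ℕ, 1 ≤ n → T (x n) = x (n + 1))
    (hTa : T a = b) (hTb : T b = a) :
    Tendsto (fun n : ℕ => dist (T (x n)) (T (T (x n))) / dist (x n) (T (x n)))
      atTop (𝓝 1) ∧
    ∀ α : ℝ, 0 < α → α < 1 →
      ∃ y ∈ ({a, b} ∪ {y : ℝ | ∃ n : ℕ, 1 ≤ n ∧ y = x n} : Set ℝ),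
        α * dist y (T y) < dist (T y) (T (T y)) := by
  have hc : (0:ℝ) < b - a := sub_pos.mpr hab
  have key : ∀ n : ℕ, 1 ≤ n →
      dist (x n) (x (n + 1)) = (b - a) + (3/2) * (1/2:ℝ) ^ n := by
    intro n hn
    have hp : (0:ℝ) < (1/2:ℝ) ^ n := by positivity
    have hp1 : (0:ℝ) < (1/2:ℝ) ^ (n+1) := by positivity
    rcases Nat.even_or_odd n with he | ho
    · rw [hx n hn, hx (n+1) (by omega), if_neg (Nat.not_odd_iff_even.mpr he),
        if_pos (Even.add_one he)]
      rw [Real.dist_eq, abs_of_nonneg (by nlinarith)]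
      ring
    · rw [hx n hn, hx (n+1) (by omega), if_pos ho,
        if_neg (Nat.not_odd_iff_even.mpr (Odd.add_one ho))]
      rw [Real.dist_eq, abs_of_nonpos (by nlinarith)]
      ring
  constructor
  · have hbase : Tendsto (fun n : ℕ => (b - a) + (3/2) * (1/2:ℝ) ^ n) atTop (𝓝 (b - a)) := by
      have := (tendsto_pow_atTop_nhds_zero_of_lt_one (by norm_num : (0:ℝ) ≤ 1/2)
        (by norm_num : (1/2:ℝ) < 1)).const_mul (3/2 : ℝ)
      have := Tendsto.const_add (b-a) this
      simpa using this
    have hshift : Tendsto (fun n : ℕ => (b - a) + (3/2) * (1/2:ℝ) ^ (n+1)) atTop (𝓝 (b - a)) :=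
      hbase.comp (tendsto_add_atTop_nat 1)
    have hdiv : Tendsto (fun n : ℕ =>
        ((b - a) + (3/2) * (1/2:ℝ) ^ (n+1)) / ((b - a) + (3/2) * (1/2:ℝ) ^ n))
        atTop (𝓝 ((b - a) / (b - a))) := hshift.div hbase (ne_of_gt hc)
    rw [div_self (ne_of_gt hc)] at hdiv
    refine Tendsto.congr' ?_ hdiv
    filter_upwards [eventually_ge_atTop 1] with n hn
    rw [hTx n hn, hTx (n+1) (by omega), key n hn, key (n+1) (by omega)]
  · intro α hα0 hα1
    refine ⟨a, Or.inl (Or.inl rfl), ?_⟩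
    rw [hTa, hTb]
    have hd : 0 < dist a b := dist_pos.mpr (ne_of_lt hab)
    calc α * dist a b < 1 * dist a b := by nlinarith
    _ = dist b a := by rw [one_mul, dist_comm]
end

section
/- Let a < b be reals, define xₙ = a − 1/2ⁿ for odd n and xₙ = b + 1/2ⁿ for even n, X = {a,b} ∪ {xₙ : n ≥ 1} with the Euclidean metric, and T : X → X given by T(xₙ) = x_{n+1}, T(a) = b, T(b) = a. Then T is continuous on X. -/
theorem stmt_13 (a b : ℝ) (hab : a < b) (x : ℕ → ℝ)
    (hx : ∀ n : ℕ, 1 ≤ n → x n = if Odd n then a - (1 / 2 : ℝ) ^ n else b + (1 / 2 : ℝ) ^ n)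
    (T : ℝ → ℝ)
    (hTx : ∀ n : ℕ, 1 ≤ n → T (x n) = x (n + 1))
    (hTa : T a = b) (hTb : T b = a) :
    ContinuousOn T ({a, b} ∪ {y : ℝ | ∃ n : ℕ, 1 ≤ n ∧ y = x n} : Set ℝ) := by
  set c := (a + b) / 2 with hc
  have hac : a < c := by rw [hc]; linarith
  have hcb : c < b := by rw [hc]; linarith
  set g : ℝ → ℝ := fun y => if y < c then b + (a - y) / 2 else a - (y - b) / 2 with hg
  set S : Set ℝ := ({a, b} ∪ {y : ℝ | ∃ n : ℕ, 1 ≤ n ∧ y = x n} : Set ℝ) with hSdef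
  have hS : ∀ y ∈ S, y < c ∨ c < y := by
    intro y hy
    simp only [hSdef, Set.mem_union, Set.mem_insert_iff, Set.mem_singleton_iff,
      Set.mem_setOf_eq] at hy
    obtain (rfl | rfl) | ⟨n, hn, rfl⟩ := hy
    · exact Or.inl hac
    · exact Or.inr hcb
    · have hp : (0:ℝ) < (1/2:ℝ)^n := by positivity
      rw [hx n hn]
      split_ifs with h
      · exact Or.inl (by linarith)
      · exact Or.inr (by linarith)
  have hgc : ContinuousOn g S := by
    intro y hy
    rcases hS y hy with h | h
    · have h1 : ContinuousAt (fun z : ℝ => b + (a - z) / 2) y := by fun_prop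
      have h2 : g =ᶠ[nhds y] fun z : ℝ => b + (a - z) / 2 := by
        filter_upwards [Iio_mem_nhds h] with z hz
        simp only [hg]
        exact if_pos hz
      exact (h1.congr h2.symm).continuousWithinAt
    · have h1 : ContinuousAt (fun z : ℝ => a - (z - b) / 2) y := by fun_prop
      have h2 : g =ᶠ[nhds y] fun z : ℝ => a - (z - b) / 2 := by
        filter_upwards [Ioi_mem_nhds h] with z hz
        simp only [hg]
        exact if_neg (not_lt.2 (le_of_lt hz))
      exact (h1.congr h2.symm).continuousWithinAt
  apply hgc.congr
  intro y hy
  simp only [hSdef, Set.mem_union, Set.mem_insert_iff, Set.mem_singleton_iff,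
    Set.mem_setOf_eq] at hy
  obtain (rfl | rfl) | ⟨n, hn, rfl⟩ := hy
  · rw [hTa]; simp [hg, if_pos hac]
  · rw [hTb]; simp [hg, if_neg (not_lt.2 hcb.le)]
  · rw [hTx n hn, hx (n+1) (by omega), hx n hn]
    have hp : (0:ℝ) < (1/2:ℝ)^n := by positivity
    by_cases hodd : Odd n
    · have hnotodd : ¬ Odd (n+1) := by simp [Nat.odd_add_one, hodd]
      rw [if_pos hodd, if_neg hnotodd]
      have hlt : a - (1/2:ℝ)^n < c := by linarith
      simp only [hg, if_pos hlt, pow_succ]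
      ring
    · have hodd1 : Odd (n+1) := by simpa [Nat.odd_add_one] using hodd
      rw [if_neg hodd, if_pos hodd1]
      have hge : ¬ (b + (1/2:ℝ)^n < c) := by push_neg; linarith
      simp only [hg, if_neg hge, pow_succ]
      ring
end

section
/- Let a < b be reals. Define a sequence (xₙ) by x_{4k+1} = a − 1/2^{k+1}, x_{4k+2} = b + 1/2^{k+1}, x_{4k+3} = a − 1/3^{k+1}, x_{4k+4} = b + 1/3^{k+1} for k ≥ 0, let X = {a,b} ∪ {xₙ : n ≥ 1} with the Euclidean metric, and T : X → X given by T(xₙ) = x_{n+1}, T(a) = b, T(b) = a. Then with x_{n_k} = x_{4k−1} = a − 3^{−k}, one has lim_{k→∞} d(T²x_{n_k}, T⁴x_{n_k})/d(x_{n_k}, T²x_{n_k}) = 1; hence for every α ∈ (0,1) there exists x ∈ X with d(T²x, T⁴x) > α·d(x, T²x), so T is not a graphic contraction of order 2. -/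
open Filter Topology

theorem stmt_15 (a b : ℝ) (hab : a < b) (x : ℕ → ℝ)
    (hx1 : ∀ k : ℕ, x (4 * k + 1) = a - (1 / 2 : ℝ) ^ (k + 1))
    (hx2 : ∀ k : ℕ, x (4 * k + 2) = b + (1 / 2 : ℝ) ^ (k + 1))
    (hx3 : ∀ k : ℕ, x (4 * k + 3) = a - (1 / 3 : ℝ) ^ (k + 1))
    (hx4 : ∀ k : ℕ, x (4 * k + 4) = b + (1 / 3 : ℝ) ^ (k + 1))
    (T : ℝ → ℝ)
    (hTx : ∀ n : ℕ, 1 ≤ n → T (x n) = x (n + 1))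
    (hTa : T a = b) (hTb : T b = a) :
    Tendsto (fun k : ℕ =>
        dist (T^[2] (x (4 * k + 3))) (T^[4] (x (4 * k + 3))) /
          dist (x (4 * k + 3)) (T^[2] (x (4 * k + 3)))) atTop (𝓝 1) ∧
    ∀ α : ℝ, 0 < α → α < 1 →
      ∃ y ∈ ({a, b} ∪ {y : ℝ | ∃ n : ℕ, 1 ≤ n ∧ y = x n} : Set ℝ),
        α * dist y (T^[2] y) < dist (T^[2] y) (T^[4] y) := by
  -- values of the sequence at the relevant indices
  have hx5 : ∀ k : ℕ, x (4 * k + 5) = a - (1 / 2 : ℝ) ^ (k + 2) := by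
    intro k
    have e : 4 * (k + 1) + 1 = 4 * k + 5 := by ring
    have := hx1 (k + 1); rw [e] at this; simpa using this
  have hx7 : ∀ k : ℕ, x (4 * k + 7) = a - (1 / 3 : ℝ) ^ (k + 2) := by
    intro k
    have e : 4 * (k + 1) + 3 = 4 * k + 7 := by ring
    have := hx3 (k + 1); rw [e] at this; simpa using this
  have hxstep : ∀ n : ℕ, 1 ≤ n → T^[2] (x n) = x (n + 2) := by
    intro n hn
    have : T^[2] (x n) = T (T (x n)) := by
      simp [Function.iterate_succ_apply']
    rw [this, hTx n hn, hTx (n + 1) (by omega)]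
  have h2 : ∀ k : ℕ, T^[2] (x (4 * k + 3)) = x (4 * k + 5) := by
    intro k
    have := hxstep (4 * k + 3) (by omega)
    simpa [show 4 * k + 3 + 2 = 4 * k + 5 by ring] using this
  have h4 : ∀ k : ℕ, T^[4] (x (4 * k + 3)) = x (4 * k + 7) := by
    intro k
    have e : T^[4] (x (4 * k + 3)) = T^[2] (T^[2] (x (4 * k + 3))) := by
      rw [← Function.iterate_add_apply]
    rw [e, h2 k, hxstep (4 * k + 5) (by omega)]
  -- power identities
  have e1 : ∀ k : ℕ, ((1 : ℝ) / 3) ^ k = (1 / 2 : ℝ) ^ k * ((2 : ℝ) / 3) ^ k := by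
    intro k; rw [← mul_pow]; norm_num
  have hme : ∀ k : ℕ, ((1 : ℝ) / 3) ^ (k + 1)
      = (1 / 2 : ℝ) ^ (k + 2) * (2 * ((2 : ℝ) / 3) ^ (k + 1)) := by
    intro k
    rw [e1 (k + 1)]
    ring
  -- the key numeric facts
  have hnum : ∀ k : ℕ,
      dist (T^[2] (x (4 * k + 3))) (T^[4] (x (4 * k + 3)))
        = (1 / 2 : ℝ) ^ (k + 2) - (1 / 3 : ℝ) ^ (k + 2) := by
    intro k
    rw [h2, h4, hx5, hx7, Real.dist_eq]
    rw [abs_of_nonpos]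
    · ring
    · have : (1 / 3 : ℝ) ^ (k + 2) ≤ (1 / 2 : ℝ) ^ (k + 2) :=
        pow_le_pow_left₀ (by norm_num) (by norm_num) _
      linarith
  have hkey : ∀ k : ℕ, 2 ≤ k → 2 * ((2 : ℝ) / 3) ^ (k + 1) < 1 := by
    intro k hk
    have h1 : ((2 : ℝ) / 3) ^ (k + 1) ≤ ((2 : ℝ) / 3) ^ 3 :=
      pow_le_pow_of_le_one (by norm_num) (by norm_num) (by omega)
    norm_num at h1 ⊢
    linarith
  have hdenpos : ∀ k : ℕ, 2 ≤ k →
      0 < (1 / 2 : ℝ) ^ (k + 2) - (1 / 3 : ℝ) ^ (k + 1) := by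
    intro k hk
    have h1 := hkey k hk
    have hp : (0 : ℝ) < (1 / 2 : ℝ) ^ (k + 2) := by positivity
    rw [hme k]
    nlinarith
  have hden : ∀ k : ℕ, 2 ≤ k →
      dist (x (4 * k + 3)) (T^[2] (x (4 * k + 3)))
        = (1 / 2 : ℝ) ^ (k + 2) - (1 / 3 : ℝ) ^ (k + 1) := by
    intro k hk
    rw [h2, hx3, hx5, Real.dist_eq]
    rw [abs_of_nonneg]
    · ring
    · have := hdenpos k hk
      linarith
  -- the auxiliary ratio
  set g : ℕ → ℝ := fun k => (1 - ((2 : ℝ) / 3) ^ (k + 2)) / (1 - 2 * ((2 : ℝ) / 3) ^ (k + 1)) with hg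
  have hpow : Tendsto (fun k : ℕ => ((2 : ℝ) / 3) ^ k) atTop (𝓝 0) :=
    tendsto_pow_atTop_nhds_zero_of_lt_one (by norm_num) (by norm_num)
  have hpow2 : Tendsto (fun k : ℕ => ((2 : ℝ) / 3) ^ (k + 2)) atTop (𝓝 0) :=
    hpow.comp (tendsto_add_atTop_nat 2)
  have hpow1 : Tendsto (fun k : ℕ => ((2 : ℝ) / 3) ^ (k + 1)) atTop (𝓝 0) :=
    hpow.comp (tendsto_add_atTop_nat 1)
  have hgt : Tendsto g atTop (𝓝 1) := by
    have h : Tendsto g atTop (𝓝 ((1 - 0) / (1 - 2 * 0))) :=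
      Tendsto.div (tendsto_const_nhds.sub hpow2)
        (tendsto_const_nhds.sub (hpow1.const_mul 2)) (by norm_num)
    simpa using h
  have heq : ∀ k : ℕ, 2 ≤ k →
      dist (T^[2] (x (4 * k + 3))) (T^[4] (x (4 * k + 3))) /
        dist (x (4 * k + 3)) (T^[2] (x (4 * k + 3))) = g k := by
    intro k hk
    have hp : ((1 / 2 : ℝ) ^ (k + 2)) ≠ 0 := by positivity
    rw [hnum k, hden k hk, hg]
    rw [show (1 / 2 : ℝ) ^ (k + 2) - (1 / 3 : ℝ) ^ (k + 2)
        = (1 / 2 : ℝ) ^ (k + 2) * (1 - ((2 : ℝ) / 3) ^ (k + 2)) by rw [e1 (k + 2)]; ring,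
      show (1 / 2 : ℝ) ^ (k + 2) - (1 / 3 : ℝ) ^ (k + 1)
        = (1 / 2 : ℝ) ^ (k + 2) * (1 - 2 * ((2 : ℝ) / 3) ^ (k + 1)) by rw [hme k]; ring,
      mul_div_mul_left _ _ hp]
  have hmain : Tendsto (fun k : ℕ =>
      dist (T^[2] (x (4 * k + 3))) (T^[4] (x (4 * k + 3))) /
        dist (x (4 * k + 3)) (T^[2] (x (4 * k + 3)))) atTop (𝓝 1) := by
    apply hgt.congr'
    filter_upwards [eventually_ge_atTop 2] with k hk
    exact (heq k hk).symm
  refine ⟨hmain, ?_⟩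
  intro α hα0 hα1
  have hev : ∀ᶠ k in atTop, α <
      dist (T^[2] (x (4 * k + 3))) (T^[4] (x (4 * k + 3))) /
        dist (x (4 * k + 3)) (T^[2] (x (4 * k + 3))) :=
    hmain.eventually (eventually_gt_nhds hα1)
  obtain ⟨k, hk2, hkα⟩ := ((eventually_ge_atTop 2).and hev).exists
  refine ⟨x (4 * k + 3), Or.inr ⟨4 * k + 3, by omega, rfl⟩, ?_⟩
  have hdpos : 0 < dist (x (4 * k + 3)) (T^[2] (x (4 * k + 3))) := by
    rw [hden k hk2]; exact hdenpos k hk2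
  exact (lt_div_iff₀ hdpos).mp hkα
end

section
/- Let a < b be reals. Define the sequence x_{4k+1} = a − 1/2^{k+1}, x_{4k+2} = b + 1/2^{k+1}, x_{4k+3} = a − 1/3^{k+1}, x_{4k+4} = b + 1/3^{k+1} for k ≥ 0, X = {a,b} ∪ {xₙ : n ≥ 1}, and T : X → X given by T(xₙ) = x_{n+1}, T(a) = b, T(b) = a. Then d(a, T³a) = d(T³a, T⁶a) = b − a > 0, so T is not a graphic contraction of order 3 for any α ∈ (0,1). -/
theorem stmt_16 (a b : ℝ) (hab : a < b) (x : ℕ → ℝ)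
    (hx1 : ∀ k : ℕ, x (4 * k + 1) = a - (1 / 2 : ℝ) ^ (k + 1))
    (hx2 : ∀ k : ℕ, x (4 * k + 2) = b + (1 / 2 : ℝ) ^ (k + 1))
    (hx3 : ∀ k : ℕ, x (4 * k + 3) = a - (1 / 3 : ℝ) ^ (k + 1))
    (hx4 : ∀ k : ℕ, x (4 * k + 4) = b + (1 / 3 : ℝ) ^ (k + 1))
    (T : ℝ → ℝ)
    (hTx : ∀ n : ℕ, 1 ≤ n → T (x n) = x (n + 1))
    (hTa : T a = b) (hTb : T b = a) :
    dist a (T^[3] a) = b - a ∧ dist (T^[3] a) (T^[6] a) = b - a ∧ 0 < b - a ∧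
    ∀ α : ℝ, 0 < α → α < 1 →
      ¬ (∀ y ∈ ({a, b} ∪ {y : ℝ | ∃ n : ℕ, 1 ≤ n ∧ y = x n} : Set ℝ),
          dist (T^[3] y) (T^[6] y) ≤ α * dist y (T^[3] y)) := by
  have h3 : T^[3] a = b := by
    simp [Function.iterate_succ_apply', hTa, hTb]
  have h6 : T^[6] a = a := by
    simp [Function.iterate_succ_apply', hTa, hTb]
  have hd : dist a b = b - a := by
    rw [Real.dist_eq, abs_of_nonpos (by linarith)]; ring
  have hd' : dist b a = b - a := by rw [dist_comm]; exact hd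
  refine ⟨by rw [h3, hd], by rw [h3, h6, hd'], by linarith, ?_⟩
  intro α hα0 hα1 h
  have := h a (Or.inl (Or.inl rfl))
  rw [h3, h6, hd', hd] at this
  nlinarith
end
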